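/- A nonzero weight-homogeneous element a = I_x·a·I_y of B(m,k) is uniquely determined by its left idempotent x and its weight vector w(a) ∈ (½ℤ)^m: if a, a' are nonzero weight-homogeneous with the same left idempotent and the same weight vector, then they have the same right idempotent and a = a'. (Symmetrically for the right idempotent.) -/
import Mathlib


/-- Idempotent states: `k`-element subsets of `{0,1,...,m}`. -/
abbrev IdemState (m k : ℕ) := {x : Finset (Fin (m + 1)) // x.card = k}

/-- The weight `v^x` at coordinate `c : Fin m`, representing the paper's
`v^x_{c+1} = #{a ∈ x : a ≥ c+1}` (coordinate `c` corresponds to the strand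
labelled `c+1`). -/
def vwt {m : ℕ} (x : Finset (Fin (m + 1))) (c : Fin m) : ℕ :=
  (x.filter (fun a => (c : ℕ) < a.val)).card

/-- Twice the minimal relative weight: `2·w^{x,y}_{c+1} = |v^x_{c+1} − v^y_{c+1}|`. -/
def wnum {m : ℕ} (x y : Finset (Fin (m + 1))) (c : Fin m) : ℕ :=
  ((vwt x c : ℤ) - (vwt y c : ℤ)).natAbs

/-- Basis elements of `B₀(m,k)`: a pair of idempotent states together with a
monomial `U_1^{s_1} ⋯ U_m^{s_m}` (recorded by its exponents); the basis element
is `φ^{x,y}(U^s)`. -/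
structure BGen (m k : ℕ) where
  l : IdemState m k
  r : IdemState m k
  s : Fin m → ℕ
deriving DecidableEq

/-- The exponents `t_i = w^{x,y}_i + w^{y,z}_i − w^{x,z}_i` of the correction
monomial `g^{x,y,z} = U_1^{t_1} ⋯ U_m^{t_m}`. -/
def texp {m k : ℕ} (x y z : IdemState m k) (c : Fin m) : ℕ :=
  (wnum x.1 y.1 c + wnum y.1 z.1 c - wnum x.1 z.1 c) / 2

/-- The product of two basis elements of `B₀(m,k)`:
`φ^{x,y}(U^s) * φ^{y',z}(U^{s'})` is zero (i.e. `none`) unless `y = y'`, in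
which case it equals `φ^{x,z}(U^s · U^{s'} · g^{x,y,z})`. -/
def mulBGen {m k : ℕ} (a b : BGen m k) : Option (BGen m k) :=
  if a.r = b.l then
    some ⟨a.l, b.r, fun c => a.s c + b.s c + texp a.l a.r b.r c⟩
  else none

/-- The underlying `F₂`-vector space of the algebra `B₀(m,k)`: formal `F₂`-linear
combinations of the basis elements `φ^{x,y}(U^s)`. -/
def B0 (m k : ℕ) : Type := BGen m k →₀ ZMod 2

noncomputable instance {m k : ℕ} : AddCommGroup (B0 m k) :=
  inferInstanceAs (AddCommGroup (BGen m k →₀ ZMod 2))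

/-- View an element of `B₀(m,k)` as a finitely supported function. -/
def B0.toF {m k : ℕ} (f : B0 m k) : BGen m k →₀ ZMod 2 := f

/-- The multiplication of `B₀(m,k)`, the bilinear extension of `mulBGen`. -/
noncomputable def mulB {m k : ℕ} (f g : B0 m k) : B0 m k :=
  (B0.toF f).sum fun a ca =>
    (B0.toF g).sum fun b cb =>
      match mulBGen a b with
      | some c => Finsupp.single c (ca * cb)
      | none => 0

noncomputable instance {m k : ℕ} : Mul (B0 m k) := ⟨mulB⟩

/-- The basis element `φ^{x,y}(U^s)` of `B₀(m,k)`. -/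
noncomputable def bElt {m k : ℕ} (g : BGen m k) : B0 m k := Finsupp.single g 1

/-- The basic idempotent `I_x ∈ B₀(m,k)`. -/
noncomputable def idemElt {m k : ℕ} (x : IdemState m k) : B0 m k :=
  bElt ⟨x, x, fun _ => 0⟩

/-- The central element `U_i = Σ_x φ^{x,x}(U_i)`; the index `i : Fin m`
corresponds to the paper's `U_{i+1}`. -/
noncomputable def UElt {m k : ℕ} (i : Fin m) : B0 m k :=
  ∑ x : IdemState m k, bElt (⟨x, x, fun c => if c = i then 1 else 0⟩ : BGen m k)

/-- The right-shift `R = Σ R^x`, moving an occupied position from `i` to `i+1`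
(the paper's `R_{i+1}`). -/
noncomputable def RElt {m k : ℕ} (i : Fin m) : B0 m k :=
  ∑ p : IdemState m k × IdemState m k,
    if i.castSucc ∈ p.1.1 ∧ i.succ ∉ p.1.1 ∧
        p.2.1 = insert i.succ (p.1.1.erase i.castSucc) then
      bElt (⟨p.1, p.2, fun _ => 0⟩ : BGen m k)
    else 0

/-- The left-shift `L = Σ L^y`, moving an occupied position from `i+1` to `i`
(the paper's `L_{i+1}`). -/
noncomputable def LElt {m k : ℕ} (i : Fin m) : B0 m k :=
  ∑ p : IdemState m k × IdemState m k,
    if i.succ ∈ p.1.1 ∧ i.castSucc ∉ p.1.1 ∧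
        p.2.1 = insert i.castSucc (p.1.1.erase i.succ) then
      bElt (⟨p.1, p.2, fun _ => 0⟩ : BGen m k)
    else 0

/-- The generating set of the two-sided ideal `J`: the elements
`L_{i+1}·L_i`, `R_i·R_{i+1}`, and `I_x·U_j` for states `x` with
`x ∩ {j−1, j} = ∅`. -/
def JGenerators (m k : ℕ) : Set (B0 m k) :=
  {z | ∃ i i' : Fin m, (i' : ℕ) = (i : ℕ) + 1 ∧
        (z = LElt i' * LElt i ∨ z = RElt i * RElt i')} ∪
  {z | ∃ (j : Fin m) (x : IdemState m k),
        j.castSucc ∉ x.1 ∧ j.succ ∉ x.1 ∧ z = idemElt x * UElt j}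

/-- The two-sided ideal `J ⊆ B₀(m,k)` generated by `JGenerators`:  since
`B₀(m,k)` is unital, it is the additive subgroup generated by all products
`a·g·b` with `g` a generator. -/
noncomputable def JIdeal (m k : ℕ) : AddSubgroup (B0 m k) :=
  AddSubgroup.closure {z | ∃ g ∈ JGenerators m k, ∃ a b : B0 m k, z = a * g * b}

/-- The map `φ^{x,y} : F₂[U_1,...,U_m] → I_x·B₀(m,k)·I_y`. -/
noncomputable def phiMap {m k : ℕ} (x y : IdemState m k)
    (p : MvPolynomial (Fin m) (ZMod 2)) : B0 m k :=
  ∑ d ∈ p.support, Finsupp.single (⟨x, y, fun c => d c⟩ : BGen m k) (MvPolynomial.coeff d p)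

/-- Two idempotent states are *far* if some pair of corresponding entries of
their increasing enumerations differs by more than `1`. -/
def FarStates {m k : ℕ} (x y : IdemState m k) : Prop :=
  ∃ j : Fin k,
    1 < |(((x.1.orderIsoOfFin x.2 j : Fin (m + 1)) : ℕ) : ℤ) -
          (((y.1.orderIsoOfFin y.2 j : Fin (m + 1)) : ℕ) : ℤ)|

/-- `[i+1, j]` is a *generating interval* for `(x, y)`: here `0 ≤ i < j ≤ m`,
`i, j ∉ x ∩ y`, every `t` with `i < t < j` lies in `x ∩ y`, and `w^{x,y}_t = 0`
for all `i+1 ≤ t ≤ j` (a paper index `t` corresponds to the coordinate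
`c = t − 1 : Fin m`). -/
def GenInterval {m k : ℕ} (x y : IdemState m k) (i j : ℕ) : Prop :=
  i < j ∧ j ≤ m ∧
  (∀ a : Fin (m + 1), (a.val = i ∨ a.val = j) → ¬(a ∈ x.1 ∧ a ∈ y.1)) ∧
  (∀ a : Fin (m + 1), i < a.val → a.val < j → a ∈ x.1 ∧ a ∈ y.1) ∧
  (∀ c : Fin m, i ≤ (c : ℕ) → (c : ℕ) < j → wnum x.1 y.1 c = 0)

/-- The monomial `U_{i+1} ⋯ U_j` associated to a generating interval. -/
noncomputable def intervalMonomial {m : ℕ} (i j : ℕ) : MvPolynomial (Fin m) (ZMod 2) :=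
  ∏ c ∈ Finset.univ.filter (fun c : Fin m => i ≤ (c : ℕ) ∧ (c : ℕ) < j),
    MvPolynomial.X c

open Classical in
/-- The ideal `I(x,y) ⊆ F₂[U_1,...,U_m]`: everything if `x` and `y` are far,
and otherwise the ideal generated by the monomials of the generating intervals
for `(x,y)`. -/
noncomputable def IIdeal {m k : ℕ} (x y : IdemState m k) :
    Ideal (MvPolynomial (Fin m) (ZMod 2)) :=
  if FarStates x y then ⊤
  else Ideal.span {q | ∃ i j : ℕ, GenInterval x y i j ∧ q = intervalMonomial i j}

namespace Stmt10Aux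

variable {m : ℕ}

/-- `G x n` counts the elements of `x` strictly greater than `n`. -/
def G (x : Finset (Fin (m + 1))) (n : ℕ) : ℕ :=
  (x.filter (fun a : Fin (m + 1) => n < a.val)).card

/-- `Ind x n` is the indicator of `n ∈ x`. -/
def Ind (x : Finset (Fin (m + 1))) (n : ℕ) : ℕ :=
  (x.filter (fun a : Fin (m + 1) => a.val = n)).card

lemma G_eq_vwt (x : Finset (Fin (m + 1))) {n : ℕ} (hn : n < m) : G x n = vwt x ⟨n, hn⟩ := rfl

lemma G_eq_zero (x : Finset (Fin (m + 1))) {n : ℕ} (h : m ≤ n) : G x n = 0 := by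
  unfold G
  rw [Finset.card_eq_zero, Finset.filter_eq_empty_iff]
  intro a _
  have := a.isLt
  omega

lemma Ind_eq (x : Finset (Fin (m + 1))) (a : Fin (m + 1)) :
    Ind x (a : ℕ) = if a ∈ x then 1 else 0 := by
  unfold Ind
  have : (x.filter (fun b : Fin (m + 1) => b.val = a.val)) = x.filter (fun b => b = a) := by
    apply Finset.filter_congr
    intro b _
    simp [Fin.val_inj]
  rw [this, Finset.filter_eq']
  split <;> simp

lemma Ind_eq_zero (x : Finset (Fin (m + 1))) {n : ℕ} (h : m + 1 ≤ n) : Ind x n = 0 := by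
  unfold Ind
  rw [Finset.card_eq_zero, Finset.filter_eq_empty_iff]
  intro a _
  have := a.isLt
  omega

lemma Ind_le_one (x : Finset (Fin (m + 1))) (n : ℕ) : Ind x n ≤ 1 := by
  by_cases h : n < m + 1
  · have := Ind_eq x ⟨n, h⟩
    simp only [Fin.val_mk] at this
    rw [this]
    split <;> omega
  · rw [Ind_eq_zero x (by omega)]
    omega

lemma G_succ (x : Finset (Fin (m + 1))) (n : ℕ) :
    G x n = G x (n + 1) + Ind x (n + 1) := by
  unfold G Ind
  have hsplit : (x.filter (fun a : Fin (m + 1) => n < a.val)) =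
      (x.filter (fun a : Fin (m + 1) => n + 1 < a.val)) ∪
        (x.filter (fun a : Fin (m + 1) => a.val = n + 1)) := by
    rw [← Finset.filter_or]
    apply Finset.filter_congr
    intro b _
    constructor
    · intro h; by_cases hb : (b : ℕ) = n + 1
      · exact Or.inr hb
      · exact Or.inl (by omega)
    · intro h; rcases h with h | h <;> omega
  rw [hsplit, Finset.card_union_of_disjoint]
  rw [Finset.disjoint_left]
  intro a ha hb
  simp only [Finset.mem_filter] at ha hb
  omega

lemma card_split (x : Finset (Fin (m + 1))) : x.card = G x 0 + Ind x 0 := by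
  unfold G Ind
  have hsplit : x = (x.filter (fun a : Fin (m + 1) => 0 < a.val)) ∪
      (x.filter (fun a : Fin (m + 1) => a.val = 0)) := by
    rw [← Finset.filter_or]
    symm
    rw [Finset.filter_eq_self]
    intro a _
    omega
  conv_lhs => rw [hsplit]
  rw [Finset.card_union_of_disjoint]
  rw [Finset.disjoint_left]
  intro a ha hb
  simp only [Finset.mem_filter] at ha hb
  omega

/-- The key combinatorial fact: two subsets of `{0,…,m}` with the same
cardinality whose counting vectors `G` agree modulo `2` at every coordinate
must be equal. -/
lemma finset_eq_of_parity (x y : Finset (Fin (m + 1))) (hc : x.card = y.card)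
    (hpar : ∀ n : ℕ, G x n % 2 = G y n % 2) : x = y := by
  have hG : ∀ n, G x n = G y n := by
    intro n
    induction n with
    | zero =>
      have hx0 := card_split x
      have hy0 := card_split y
      have hix := Ind_le_one x 0
      have hiy := Ind_le_one y 0
      have hp := hpar 0
      omega
    | succ n ih =>
      have hx0 := G_succ x n
      have hy0 := G_succ y n
      have hix := Ind_le_one x (n + 1)
      have hiy := Ind_le_one y (n + 1)
      have hp := hpar (n + 1)
      omega
  have hI : ∀ n, Ind x n = Ind y n := by
    intro n
    rcases Nat.eq_zero_or_pos n with h0 | hpos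
    · subst h0
      have hx0 := card_split x
      have hy0 := card_split y
      have := hG 0
      omega
    · obtain ⟨p, rfl⟩ : ∃ p, n = p + 1 := ⟨n - 1, by omega⟩
      have hx0 := G_succ x p
      have hy0 := G_succ y p
      have h1 := hG p
      have h2 := hG (p + 1)
      omega
  ext a
  have hia := hI (a : ℕ)
  rw [Ind_eq x a, Ind_eq y a] at hia
  by_cases hx : a ∈ x <;> by_cases hy : a ∈ y <;> simp [hx, hy] at hia ⊢

end Stmt10Aux

/-- A nonzero weight-homogeneous element `a = I_x·a·I_y` of
`B(m,k) = B₀(m,k)/J` is uniquely determined by its left idempotent and its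
weight vector `w(a) ∈ (½ℤ)^m` (and symmetrically by its right idempotent and
its weight vector): if `φ^{x,y}(U^s)` and `φ^{x',y'}(U^{s'})` are both nonzero
in the quotient (do not lie in `J`) and have the same weight vector
`w_c = ½·wnum + s_c`, then `x = x'` implies `y = y'` and `s = s'`, and
`y = y'` implies `x = x'` and `s = s'`. -/
theorem homogeneous_determined_by_idempotent_and_weight (m k : ℕ) (hk : k ≤ m + 1)
    (x y x' y' : IdemState m k) (s s' : Fin m → ℕ)
    (h1 : bElt (⟨x, y, s⟩ : BGen m k) ∉ JIdeal m k)
    (h2 : bElt (⟨x', y', s'⟩ : BGen m k) ∉ JIdeal m k)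
    (hw : ∀ c : Fin m,
      (wnum x.1 y.1 c : ℚ) / 2 + (s c : ℚ) = (wnum x'.1 y'.1 c : ℚ) / 2 + (s' c : ℚ)) :
    (x = x' → y = y' ∧ s = s') ∧ (y = y' → x = x' ∧ s = s') := by
  classical
  open Stmt10Aux in
  -- Clear the weight equation of denominators, landing in ℕ.
  have hw' : ∀ c : Fin m,
      wnum x.1 y.1 c + 2 * s c = wnum x'.1 y'.1 c + 2 * s' c := by
    intro c
    have h := hw c
    have h2 : (wnum x.1 y.1 c : ℚ) + 2 * (s c : ℚ)
        = (wnum x'.1 y'.1 c : ℚ) + 2 * (s' c : ℚ) := by linarith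
    exact_mod_cast h2
  constructor
  · rintro rfl
    have hyy : y.1 = y'.1 := by
      apply finset_eq_of_parity _ _ (by rw [y.2, y'.2])
      intro n
      by_cases hn : n < m
      · have h := hw' ⟨n, hn⟩
        unfold wnum at h
        rw [G_eq_vwt y.1 hn, G_eq_vwt y'.1 hn]
        omega
      · rw [G_eq_zero _ (by omega), G_eq_zero _ (by omega)]
    refine ⟨Subtype.ext hyy, funext fun c => ?_⟩
    have h := hw' c
    rw [hyy] at h
    omega
  · rintro rfl
    have hxx : x.1 = x'.1 := by
      apply finset_eq_of_parity _ _ (by rw [x.2, x'.2])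
      intro n
      by_cases hn : n < m
      · have h := hw' ⟨n, hn⟩
        unfold wnum at h
        rw [G_eq_vwt x.1 hn, G_eq_vwt x'.1 hn]
        omega
      · rw [G_eq_zero _ (by omega), G_eq_zero _ (by omega)]
    refine ⟨Subtype.ext hxx, funext fun c => ?_⟩
    have h := hw' c
    rw [hxx] at h
    omega
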